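/- With the notation of the context, the double integral ∬ u(x)u(y)(e^{F(x,y)}−1)n(x,y) dx dy converges absolutely, every integral below is finite, and the quadratic form 𝓔^{μ,F}(u,u) := 𝓔(u,u) − ∬_{ℝ^d×ℝ^d} u(x)u(y)(e^{F(x,y)}−1)n(x,y) dy dx − ∫u²dμ⁺ + ∫u²dμ⁻ satisfies the identity 𝓔^{μ,F}(u,u) = 𝓔(u,u) + ∫_{ℝ^d} u² dρ⁻ − (1/2)∬_{ℝ^d×ℝ^d} (u(x)−u(y))² G⁻(x,y) n(x,y) dx dy + (1/2)∬_{ℝ^d×ℝ^d} (u(x)−u(y))² G⁺(x,y) n(x,y) dx dy − ∫_{ℝ^d} u² dρ⁺. -/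

import Mathlib

noncomputable section

open MeasureTheory Real ENNReal Set
open scoped Classical

/-- The state space `ℝ^d` with the Euclidean norm and Lebesgue measure. -/
abbrev V (d : ℕ) := EuclideanSpace ℝ (Fin d)

/-- `I(r) = ∫₀^∞ s^{(d+α)/2-1} e^{-s/4 - r²/s} ds`. -/
def Ifun (d : ℕ) (α r : ℝ) : ℝ :=
  ∫ s in Set.Ioi (0 : ℝ), s ^ (((d : ℝ) + α) / 2 - 1) * Real.exp (-s / 4 - r ^ 2 / s)

/-- `ψ(r) = I(r)/I(0)`. -/
def psi (d : ℕ) (α r : ℝ) : ℝ := Ifun d α r / Ifun d α 0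

/-- The constant `C(d,-α) = α Γ((d+α)/2) / (2^{1-α} π^{d/2} Γ(1-α/2))`. -/
def Cconst (d : ℕ) (α : ℝ) : ℝ :=
  α * Real.Gamma (((d : ℝ) + α) / 2) /
    (2 ^ (1 - α) * Real.pi ^ ((d : ℝ) / 2) * Real.Gamma (1 - α / 2))

/-- Jump kernel density `n(x,y) = 2C(d,-α) ψ(m^{1/α}|x-y|) |x-y|^{-(d+α)}` for `x ≠ y`,
with `n(x,x) = 0`. -/
def nker (d : ℕ) (α m : ℝ) (x y : V d) : ℝ :=
  if x = y then 0
  else 2 * Cconst d α * psi d α (m ^ (1 / α) * ‖x - y‖) / ‖x - y‖ ^ ((d : ℝ) + α)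

/-- `F⁺ = F ∨ 0`. -/
def Fp (d : ℕ) (F : V d → V d → ℝ) (x y : V d) : ℝ := max (F x y) 0

/-- `F⁻ = -(F ∧ 0)`. -/
def Fm (d : ℕ) (F : V d → V d → ℝ) (x y : V d) : ℝ := -(min (F x y) 0)

/-- `G⁺ = (e^{F⁺} - 1) e^{-F⁻}`. -/
def Gp (d : ℕ) (F : V d → V d → ℝ) (x y : V d) : ℝ :=
  (Real.exp (Fp d F x y) - 1) * Real.exp (-(Fm d F x y))

/-- `G⁻ = 1 - e^{-F⁻}`. -/
def Gm (d : ℕ) (F : V d → V d → ℝ) (x y : V d) : ℝ := 1 - Real.exp (-(Fm d F x y))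

/-- The Dirichlet form `𝓔(u,u) = (1/2)∬ (u(x)-u(y))² n(x,y) dx dy` (in `[0,∞]`). -/
def En (d : ℕ) (α m : ℝ) (u : V d → ℝ) : ℝ≥0∞ :=
  (1 / 2) * ∫⁻ x, ∫⁻ y, ENNReal.ofReal ((u x - u y) ^ 2 * nker d α m x y)

/-- The jump-type energy `∬ (u(x)-u(y))² G(x,y) n(x,y) dx dy` (in `[0,∞]`). -/
def Jform (d : ℕ) (α m : ℝ) (G : V d → V d → ℝ) (u : V d → ℝ) : ℝ≥0∞ :=
  ∫⁻ x, ∫⁻ y, ENNReal.ofReal ((u x - u y) ^ 2 * G x y * nker d α m x y)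

/-- `NG(x) = ∫ G(x,y) n(x,y) dy` (in `[0,∞]`). -/
def NG (d : ℕ) (α m : ℝ) (G : V d → V d → ℝ) (x : V d) : ℝ≥0∞ :=
  ∫⁻ y, ENNReal.ofReal (G x y * nker d α m x y)

/-- `ρ = μ + ξ_G` where `ξ_G(dx) = NG(x) dx`. -/
def rho (d : ℕ) (α m : ℝ) (G : V d → V d → ℝ) (μ : Measure (V d)) : Measure (V d) :=
  μ + volume.withDensity (NG d α m G)

/-- `∫ u² dμ` (in `[0,∞]`). -/
def sqInt (d : ℕ) (u : V d → ℝ) (μ : Measure (V d)) : ℝ≥0∞ :=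
  ∫⁻ x, ENNReal.ofReal ((u x) ^ 2) ∂μ

/-- The cross term `∬ u(x)u(y)(e^{F(x,y)}-1) n(x,y) dy dx` (Lebesgue–Bochner integral on the
product space). -/
def crossInt (d : ℕ) (α m : ℝ) (F : V d → V d → ℝ) (u : V d → ℝ) : ℝ :=
  ∫ p : V d × V d, u p.1 * u p.2 * (Real.exp (F p.1 p.2) - 1) * nker d α m p.1 p.2

/-- The quadratic form
`𝓔^{μ,F}(u,u) = 𝓔(u,u) - ∬ u(x)u(y)(e^{F(x,y)}-1)n(x,y) dy dx - ∫ u² dμ⁺ + ∫ u² dμ⁻`. -/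
def EmuF (d : ℕ) (α m : ℝ) (F : V d → V d → ℝ) (μp μm : Measure (V d)) (u : V d → ℝ) : ℝ :=
  (En d α m u).toReal - crossInt d α m F u - (sqInt d u μp).toReal + (sqInt d u μm).toReal

/-- The killed form
`𝓔⁻(u,u) = (1/2)∬ (u(x)-u(y))² e^{-F⁻(x,y)} n(x,y) dx dy + ∫ u² dρ⁻` (in `[0,∞]`). -/
def EnMinus (d : ℕ) (α m : ℝ) (F : V d → V d → ℝ) (μm : Measure (V d)) (u : V d → ℝ) : ℝ≥0∞ :=
  (1 / 2) * (∫⁻ x, ∫⁻ y, ENNReal.ofReal ((u x - u y) ^ 2 * Real.exp (-(Fm d F x y)) * nker d α m x y))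
    + sqInt d u (rho d α m (Gm d F) μm)

/-!
Since `e^F - 1 = G⁺ - G⁻`, the cross term splits into two terms with kernels `k = G^± n`, which
are nonnegative and symmetric. For such a kernel, polarization
`u(x)u(y) = (u(x)² + u(y)² - (u(x) - u(y))²)/2` and the symmetry of `k` give
`∬ u(x)u(y) k = ∫ u² Nk - ½ ∬ (u(x) - u(y))² k`, where `Nk(x) = ∫ k(x,y) dy`; all three terms are
finite as soon as `∫ u² Nk` is, because `(u(x) - u(y))² ≤ 2u(x)² + 2u(y)²`. Finally
`∫ u² dρ^± = ∫ u² dμ^± + ∫ u² NG^±`.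
-/

lemma integrable_and_integral_eq_toReal_lintegral {Y : Type*} [MeasurableSpace Y] {ν : Measure Y}
    {f : Y → ℝ} (hf : Measurable f) (hf_nonneg : ∀ y, 0 ≤ f y)
    (hf_fin : ∫⁻ y, ENNReal.ofReal (f y) ∂ν ≠ ⊤) :
    Integrable f ν ∧ ∫ y, f y ∂ν = (∫⁻ y, ENNReal.ofReal (f y) ∂ν).toReal :=
  ⟨(lintegral_ofReal_ne_top_iff_integrable hf.aestronglyMeasurable
      (ae_of_all _ hf_nonneg)).1 hf_fin,
    integral_eq_lintegral_of_nonneg_ae (ae_of_all _ hf_nonneg) hf.aestronglyMeasurable⟩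

section SymmetricKernel

variable {X : Type*} [MeasurableSpace X] {k : X → X → ℝ} {u : X → ℝ}

lemma lintegral_sq_sub_mul_le {ν : Measure (X × X)} (hk : Measurable (Function.uncurry k))
    (hk_nonneg : ∀ x y, 0 ≤ k x y) (hu : Measurable u) :
    ∫⁻ p, ENNReal.ofReal ((u p.1 - u p.2) ^ 2 * k p.1 p.2) ∂ν
      ≤ 2 * ∫⁻ p, ENNReal.ofReal (u p.1 ^ 2 * k p.1 p.2) ∂ν
        + 2 * ∫⁻ p, ENNReal.ofReal (u p.2 ^ 2 * k p.1 p.2) ∂ν := by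
  have hm : Measurable fun p : X × X => u p.1 ^ 2 * k p.1 p.2 :=
    ((hu.comp measurable_fst).pow_const 2).mul hk
  rw [← lintegral_const_mul _ hm.ennreal_ofReal, ← lintegral_const_mul' _ _ ofNat_ne_top,
    ← lintegral_add_left (hm.ennreal_ofReal.const_mul _)]
  refine lintegral_mono fun p => ?_
  have ha : 0 ≤ u p.1 ^ 2 * k p.1 p.2 := mul_nonneg (sq_nonneg _) (hk_nonneg _ _)
  have hb : 0 ≤ u p.2 ^ 2 * k p.1 p.2 := mul_nonneg (sq_nonneg _) (hk_nonneg _ _)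
  calc ENNReal.ofReal ((u p.1 - u p.2) ^ 2 * k p.1 p.2)
      ≤ ENNReal.ofReal (2 * (u p.1 ^ 2 * k p.1 p.2) + 2 * (u p.2 ^ 2 * k p.1 p.2)) := by
        gcongr
        nlinarith [mul_nonneg (sq_nonneg (u p.1 + u p.2)) (hk_nonneg p.1 p.2)]
    _ = 2 * ENNReal.ofReal (u p.1 ^ 2 * k p.1 p.2)
          + 2 * ENNReal.ofReal (u p.2 ^ 2 * k p.1 p.2) := by
        rw [ENNReal.ofReal_add (by positivity) (by positivity), ENNReal.ofReal_mul zero_le_two,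
          ENNReal.ofReal_mul zero_le_two, ENNReal.ofReal_ofNat]

variable {μ : Measure X} [SFinite μ]

lemma lintegral_prod_sq_fst_mul (hk : Measurable (Function.uncurry k)) (hu : Measurable u) :
    ∫⁻ p, ENNReal.ofReal (u p.1 ^ 2 * k p.1 p.2) ∂μ.prod μ
      = ∫⁻ x, ENNReal.ofReal (u x ^ 2) * ∫⁻ y, ENNReal.ofReal (k x y) ∂μ ∂μ := by
  have hm : Measurable fun p : X × X => u p.1 ^ 2 * k p.1 p.2 :=
    ((hu.comp measurable_fst).pow_const 2).mul hk
  rw [lintegral_prod _ hm.ennreal_ofReal.aemeasurable]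
  refine lintegral_congr fun x => ?_
  simp_rw [ENNReal.ofReal_mul (sq_nonneg (u x))]
  exact lintegral_const_mul _ hk.of_uncurry_left.ennreal_ofReal

lemma lintegral_prod_sq_snd_mul (hk_symm : ∀ x y, k x y = k y x) :
    ∫⁻ p, ENNReal.ofReal (u p.2 ^ 2 * k p.1 p.2) ∂μ.prod μ
      = ∫⁻ p, ENNReal.ofReal (u p.1 ^ 2 * k p.1 p.2) ∂μ.prod μ := by
  rw [← lintegral_prod_swap]
  simp only [Prod.fst_swap, Prod.snd_swap, hk_symm]

theorem integrable_and_integral_mul_mul_of_symm (hk : Measurable (Function.uncurry k))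
    (hk_nonneg : ∀ x y, 0 ≤ k x y) (hk_symm : ∀ x y, k x y = k y x) (hu : Measurable u)
    (hA : ∫⁻ x, ENNReal.ofReal (u x ^ 2) * ∫⁻ y, ENNReal.ofReal (k x y) ∂μ ∂μ ≠ ⊤) :
    Integrable (fun p : X × X => u p.1 * u p.2 * k p.1 p.2) (μ.prod μ) ∧
      ∫⁻ x, ∫⁻ y, ENNReal.ofReal ((u x - u y) ^ 2 * k x y) ∂μ ∂μ ≠ ⊤ ∧
      ∫ p, u p.1 * u p.2 * k p.1 p.2 ∂μ.prod μ
        = (∫⁻ x, ENNReal.ofReal (u x ^ 2) * ∫⁻ y, ENNReal.ofReal (k x y) ∂μ ∂μ).toReal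
          - 1 / 2 * (∫⁻ x, ∫⁻ y, ENNReal.ofReal ((u x - u y) ^ 2 * k x y) ∂μ ∂μ).toReal := by
  have hu₁ : Measurable fun p : X × X => u p.1 := hu.comp measurable_fst
  have hu₂ : Measurable fun p : X × X => u p.2 := hu.comp measurable_snd
  have hm₁ : Measurable fun p : X × X => u p.1 ^ 2 * k p.1 p.2 := (hu₁.pow_const 2).mul hk
  have hm₂ : Measurable fun p : X × X => u p.2 ^ 2 * k p.1 p.2 := (hu₂.pow_const 2).mul hk
  have hm₃ : Measurable fun p : X × X => (u p.1 - u p.2) ^ 2 * k p.1 p.2 :=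
    ((hu₁.sub hu₂).pow_const 2).mul hk
  have hfst := lintegral_prod_sq_fst_mul (μ := μ) hk hu
  have hsnd := (lintegral_prod_sq_snd_mul (μ := μ) (u := u) hk_symm).trans hfst
  have hsub := lintegral_prod (μ := μ) (ν := μ) _ hm₃.ennreal_ofReal.aemeasurable
  have hJ : ∫⁻ p, ENNReal.ofReal ((u p.1 - u p.2) ^ 2 * k p.1 p.2) ∂μ.prod μ ≠ ⊤ := by
    refine ne_top_of_le_ne_top ?_ (lintegral_sq_sub_mul_le hk hk_nonneg hu)
    rw [hfst, hsnd]
    finiteness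
  obtain ⟨hi₁, hI₁⟩ := integrable_and_integral_eq_toReal_lintegral hm₁
    (fun p => mul_nonneg (sq_nonneg _) (hk_nonneg _ _)) (hfst ▸ hA)
  obtain ⟨hi₂, hI₂⟩ := integrable_and_integral_eq_toReal_lintegral hm₂
    (fun p => mul_nonneg (sq_nonneg _) (hk_nonneg _ _)) (hsnd ▸ hA)
  obtain ⟨hi₃, hI₃⟩ := integrable_and_integral_eq_toReal_lintegral hm₃
    (fun p => mul_nonneg (sq_nonneg _) (hk_nonneg _ _)) hJ
  have hpolar : (fun p : X × X => u p.1 * u p.2 * k p.1 p.2) = fun p =>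
      (u p.1 ^ 2 * k p.1 p.2 + u p.2 ^ 2 * k p.1 p.2 - (u p.1 - u p.2) ^ 2 * k p.1 p.2) / 2 := by
    funext p; ring
  have hi₁₂ : Integrable (fun p : X × X => u p.1 ^ 2 * k p.1 p.2 + u p.2 ^ 2 * k p.1 p.2)
      (μ.prod μ) := hi₁.add hi₂
  refine ⟨hpolar ▸ (hi₁₂.sub hi₃).div_const 2, hsub ▸ hJ, ?_⟩
  rw [hpolar, integral_div, integral_sub hi₁₂ hi₃, integral_add hi₁ hi₂, hI₁, hI₂, hI₃,
    hfst, hsnd, hsub]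
  ring

end SymmetricKernel

section JumpKernel

lemma Ifun_nonneg (d : ℕ) (α r : ℝ) : 0 ≤ Ifun d α r :=
  setIntegral_nonneg measurableSet_Ioi fun _ hs =>
    mul_nonneg (rpow_nonneg (le_of_lt hs) _) (exp_nonneg _)

lemma Cconst_nonneg (d : ℕ) {α : ℝ} (hα0 : 0 < α) (hα2 : α < 2) : 0 ≤ Cconst d α := by
  have hΓ : 0 < Gamma (1 - α / 2) := Gamma_pos_of_pos (by linarith)
  have hΓ' : 0 ≤ Gamma ((d + α) / 2) := Gamma_nonneg_of_nonneg (by positivity)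
  unfold Cconst
  positivity

lemma nker_nonneg (d : ℕ) {α : ℝ} (m : ℝ) (hα0 : 0 < α) (hα2 : α < 2) (x y : V d) :
    0 ≤ nker d α m x y := by
  have hC := Cconst_nonneg d hα0 hα2
  have hψ : 0 ≤ psi d α (m ^ (1 / α) * ‖x - y‖) :=
    div_nonneg (Ifun_nonneg _ _ _) (Ifun_nonneg _ _ _)
  unfold nker
  split_ifs
  · exact le_rfl
  · positivity

lemma nker_symm (d : ℕ) (α m : ℝ) (x y : V d) : nker d α m x y = nker d α m y x := by
  unfold nker
  rw [norm_sub_rev]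
  simp only [eq_comm]

lemma measurable_Ifun (d : ℕ) (α : ℝ) : Measurable (Ifun d α) := by
  have hf : StronglyMeasurable fun p : ℝ × ℝ =>
      p.2 ^ (((d : ℝ) + α) / 2 - 1) * exp (-p.2 / 4 - p.1 ^ 2 / p.2) :=
    Measurable.stronglyMeasurable (by fun_prop)
  exact (hf.integral_prod_right' (ν := volume.restrict (Ioi 0))).measurable

lemma measurable_nker (d : ℕ) (α m : ℝ) : Measurable (Function.uncurry (nker d α m)) := by
  have hψ : Measurable (psi d α) := (measurable_Ifun d α).div_const _
  have hnorm : Measurable fun p : V d × V d => ‖p.1 - p.2‖ := by fun_prop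
  exact Measurable.ite (measurableSet_eq_fun measurable_fst measurable_snd) measurable_const
    ((measurable_const.mul (hψ.comp (measurable_const.mul hnorm))).div
      (hnorm.pow measurable_const))

lemma measurable_NG (d : ℕ) (α m : ℝ) {G : V d → V d → ℝ}
    (hG : Measurable (Function.uncurry G)) : Measurable (NG d α m G) :=
  Measurable.lintegral_prod_right (f := fun x y => ENNReal.ofReal (G x y * nker d α m x y))
    (hG.mul (measurable_nker d α m)).ennreal_ofReal

lemma sqInt_rho (d : ℕ) (α m : ℝ) {G : V d → V d → ℝ} (hG : Measurable (Function.uncurry G))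
    {u : V d → ℝ} (hu : Measurable u) (μ : Measure (V d)) :
    sqInt d u (rho d α m G μ) = sqInt d u μ + ∫⁻ x, ENNReal.ofReal (u x ^ 2) * NG d α m G x := by
  unfold sqInt rho
  rw [lintegral_add_measure, lintegral_withDensity_eq_lintegral_mul _ (measurable_NG d α m hG)
    (hu.pow_const 2).ennreal_ofReal]
  simp only [Pi.mul_apply, mul_comm]

theorem integrable_and_integral_cross_term (d : ℕ) {α : ℝ} (m : ℝ) (hα0 : 0 < α) (hα2 : α < 2)
    {G : V d → V d → ℝ} (hG : Measurable (Function.uncurry G)) (hG_nonneg : ∀ x y, 0 ≤ G x y)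
    (hG_symm : ∀ x y, G x y = G y x) {u : V d → ℝ} (hu : Measurable u)
    (hNG : ∫⁻ x, ENNReal.ofReal (u x ^ 2) * NG d α m G x ≠ ⊤) :
    Integrable (fun p : V d × V d => u p.1 * u p.2 * G p.1 p.2 * nker d α m p.1 p.2) ∧
      Jform d α m G u ≠ ⊤ ∧
      ∫ p : V d × V d, u p.1 * u p.2 * G p.1 p.2 * nker d α m p.1 p.2
        = (∫⁻ x, ENNReal.ofReal (u x ^ 2) * NG d α m G x).toReal
          - 1 / 2 * (Jform d α m G u).toReal := by
  have := integrable_and_integral_mul_mul_of_symm (μ := volume)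
    (k := fun x y => G x y * nker d α m x y) (hG.mul (measurable_nker d α m))
    (fun x y => mul_nonneg (hG_nonneg x y) (nker_nonneg d m hα0 hα2 x y))
    (fun x y => by rw [hG_symm, nker_symm]) hu hNG
  simpa only [Jform, NG, mul_assoc, ← Measure.volume_eq_prod] using this

end JumpKernel

section Perturbation

variable {d : ℕ} {F : V d → V d → ℝ}

lemma Gp_nonneg (x y : V d) : 0 ≤ Gp d F x y :=
  mul_nonneg (sub_nonneg.2 (one_le_exp (le_max_right _ _))) (exp_nonneg _)

lemma Gm_nonneg (x y : V d) : 0 ≤ Gm d F x y :=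
  sub_nonneg.2 (exp_le_one_iff.2 (by simp [Fm]))

lemma Gp_symm (hF : ∀ x y, F x y = F y x) (x y : V d) : Gp d F x y = Gp d F y x := by
  simp only [Gp, Fp, Fm, hF x y]

lemma Gm_symm (hF : ∀ x y, F x y = F y x) (x y : V d) : Gm d F x y = Gm d F y x := by
  simp only [Gm, Fm, hF x y]

lemma measurable_Gp (hF : Measurable (Function.uncurry F)) :
    Measurable (Function.uncurry (Gp d F)) :=
  ((hF.max measurable_const).exp.sub measurable_const).mul (hF.min measurable_const).neg.neg.exp

lemma measurable_Gm (hF : Measurable (Function.uncurry F)) :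
    Measurable (Function.uncurry (Gm d F)) :=
  measurable_const.sub (hF.min measurable_const).neg.neg.exp

lemma exp_sub_one_eq_Gp_sub_Gm (x y : V d) : exp (F x y) - 1 = Gp d F x y - Gm d F x y := by
  have hF : F x y = Fp d F x y + -Fm d F x y := by simp [Fp, Fm, max_add_min]
  rw [Gp, Gm, hF, exp_add]
  ring

end Perturbation

theorem schrodinger_form_identity_general
    (d : ℕ) (α m : ℝ) (hα0 : 0 < α) (hα2 : α < 2)
    (F : V d → V d → ℝ) (hFmeas : Measurable (Function.uncurry F))
    (hFsymm : ∀ x y, F x y = F y x)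
    (μp μm : Measure (V d))
    (u : V d → ℝ) (hu : Measurable u)
    (hμp : sqInt d u μp ≠ ⊤) (hμm : sqInt d u μm ≠ ⊤)
    (hNGp : ∫⁻ x, ENNReal.ofReal ((u x) ^ 2) * NG d α m (Gp d F) x ≠ ⊤)
    (hNGm : ∫⁻ x, ENNReal.ofReal ((u x) ^ 2) * NG d α m (Gm d F) x ≠ ⊤) :
    Integrable
      (fun p : V d × V d => u p.1 * u p.2 * (Real.exp (F p.1 p.2) - 1) * nker d α m p.1 p.2) ∧
    Jform d α m (Gm d F) u ≠ ⊤ ∧ Jform d α m (Gp d F) u ≠ ⊤ ∧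
    sqInt d u (rho d α m (Gm d F) μm) ≠ ⊤ ∧ sqInt d u (rho d α m (Gp d F) μp) ≠ ⊤ ∧
    EmuF d α m F μp μm u
      = (En d α m u).toReal + (sqInt d u (rho d α m (Gm d F) μm)).toReal
        - (1 / 2) * (Jform d α m (Gm d F) u).toReal
        + (1 / 2) * (Jform d α m (Gp d F) u).toReal
        - (sqInt d u (rho d α m (Gp d F) μp)).toReal := by
  obtain ⟨hintp, hJp, hIp⟩ := integrable_and_integral_cross_term d m hα0 hα2
    (measurable_Gp hFmeas) Gp_nonneg (Gp_symm hFsymm) hu hNGp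
  obtain ⟨hintm, hJm, hIm⟩ := integrable_and_integral_cross_term d m hα0 hα2
    (measurable_Gm hFmeas) Gm_nonneg (Gm_symm hFsymm) hu hNGm
  have hcross : (fun p : V d × V d => u p.1 * u p.2 * (exp (F p.1 p.2) - 1) * nker d α m p.1 p.2)
      = fun p => u p.1 * u p.2 * Gp d F p.1 p.2 * nker d α m p.1 p.2
          - u p.1 * u p.2 * Gm d F p.1 p.2 * nker d α m p.1 p.2 := by
    funext p
    rw [exp_sub_one_eq_Gp_sub_Gm]
    ring
  rw [sqInt_rho d α m (measurable_Gm hFmeas) hu, sqInt_rho d α m (measurable_Gp hFmeas) hu]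
  refine ⟨hcross ▸ hintp.sub hintm, hJm, hJp, add_ne_top.2 ⟨hμm, hNGm⟩,
    add_ne_top.2 ⟨hμp, hNGp⟩, ?_⟩
  rw [EmuF, crossInt, hcross, integral_sub hintp hintm, hIp, hIm, toReal_add hμm hNGm,
    toReal_add hμp hNGp]
  ring

/-- The cross term converges absolutely, every integral below is finite, and
`𝓔^{μ,F}(u,u) = 𝓔(u,u) + ∫ u² dρ⁻ - (1/2)∬ (u(x)-u(y))² G⁻ n dx dy
  + (1/2)∬ (u(x)-u(y))² G⁺ n dx dy - ∫ u² dρ⁺`. -/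
theorem schrodinger_form_identity
    (d : ℕ) (hd : 1 ≤ d) (α m : ℝ) (hα0 : 0 < α) (hα2 : α < 2) (hm : 0 ≤ m)
    (F : V d → V d → ℝ) (hFmeas : Measurable (Function.uncurry F))
    (hFbound : ∃ M : ℝ, ∀ x y, |F x y| ≤ M)
    (hFsymm : ∀ x y, F x y = F y x) (hFdiag : ∀ x, F x x = 0)
    (μp μm : Measure (V d))
    (u : V d → ℝ) (hu : Measurable u)
    (hE : En d α m u ≠ ⊤)
    (hμp : sqInt d u μp ≠ ⊤) (hμm : sqInt d u μm ≠ ⊤)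
    (hNGp : ∫⁻ x, ENNReal.ofReal ((u x) ^ 2) * NG d α m (Gp d F) x ≠ ⊤)
    (hNGm : ∫⁻ x, ENNReal.ofReal ((u x) ^ 2) * NG d α m (Gm d F) x ≠ ⊤) :
    Integrable
      (fun p : V d × V d => u p.1 * u p.2 * (Real.exp (F p.1 p.2) - 1) * nker d α m p.1 p.2) ∧
    Jform d α m (Gm d F) u ≠ ⊤ ∧ Jform d α m (Gp d F) u ≠ ⊤ ∧
    sqInt d u (rho d α m (Gm d F) μm) ≠ ⊤ ∧ sqInt d u (rho d α m (Gp d F) μp) ≠ ⊤ ∧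
    EmuF d α m F μp μm u
      = (En d α m u).toReal + (sqInt d u (rho d α m (Gm d F) μm)).toReal
        - (1 / 2) * (Jform d α m (Gm d F) u).toReal
        + (1 / 2) * (Jform d α m (Gp d F) u).toReal
        - (sqInt d u (rho d α m (Gp d F) μp)).toReal :=
  schrodinger_form_identity_general d α m hα0 hα2 F hFmeas hFsymm μp μm u hu hμp hμm hNGp hNGm
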